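/- arXiv:math/0101055 — 2 statements merged into one kernel-verified Lean document; each statement's English description precedes it below -/
import Mathlib

section
/- Let p(x), q(x) ∈ ℤ[x] with q(n) ≠ 0 for all integers n ≥ 0, and let f ∈ ℚ⟦X⟧ be the formal power series whose n-th coefficient is p(n)/q(n). Then f satisfies a nontrivial homogeneous linear differential equation with polynomial coefficients over ℚ: there exist k ≥ 0 and polynomials c_0(X), …, c_k(X) ∈ ℚ[X], not all zero, such that Σ_{i=0}^k c_i(X) · f^{(i)}(X) = 0 as a formal power series, where f^{(i)} denotes the i-th formal derivative of f. -/
open Polynomial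

private lemma dp_span : ∀ (n : ℕ) (R : Polynomial ℚ), R.natDegree ≤ n →
    ∃ u : ℕ → ℚ, R = ∑ i ∈ Finset.range (n + 1), Polynomial.C (u i) * descPochhammer ℚ i := by
  intro n
  induction n with
  | zero =>
    intro R hR
    refine ⟨fun _ => R.coeff 0, ?_⟩
    rw [Polynomial.eq_C_of_natDegree_le_zero hR]
    simp [descPochhammer_zero]
  | succ n ih =>
    intro R hR
    by_cases h : R.natDegree ≤ n
    · obtain ⟨u, hu⟩ := ih R h
      refine ⟨fun i => if i ≤ n then u i else 0, ?_⟩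
      rw [Finset.sum_range_succ]
      beta_reduce
      rw [if_neg (by omega : ¬ (n + 1 ≤ n)), map_zero, zero_mul, add_zero, hu]
      exact Finset.sum_congr rfl fun i hi => by
        rw [if_pos (by simp only [Finset.mem_range] at hi; omega)]
    · have hR0 : R ≠ 0 := by
        intro h0; rw [h0] at h; simp at h
      have hdeg : R.natDegree = n + 1 := by omega
      have hlc : R.leadingCoeff ≠ 0 := leadingCoeff_ne_zero.mpr hR0
      have hmon := monic_descPochhammer ℚ (n + 1)
      have hdpd : (descPochhammer ℚ (n + 1)).degree = ((n + 1 : ℕ) : WithBot ℕ) := by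
        rw [degree_eq_natDegree hmon.ne_zero, descPochhammer_natDegree]
      have hdeg2 : (Polynomial.C R.leadingCoeff * descPochhammer ℚ (n + 1)).degree = R.degree := by
        rw [degree_mul, degree_C hlc, zero_add, hdpd, degree_eq_natDegree hR0, hdeg]
      have hlc2 : (Polynomial.C R.leadingCoeff * descPochhammer ℚ (n + 1)).leadingCoeff
          = R.leadingCoeff := by
        rw [leadingCoeff_mul, hmon.leadingCoeff, leadingCoeff_C, mul_one]
      have hSdeg : (R - Polynomial.C R.leadingCoeff * descPochhammer ℚ (n + 1)).natDegree ≤ n := by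
        by_cases hS0 : R - Polynomial.C R.leadingCoeff * descPochhammer ℚ (n + 1) = 0
        · rw [hS0]; simp
        · have hlt := degree_sub_lt hdeg2.symm hR0 hlc2.symm
          rw [degree_eq_natDegree hR0, hdeg] at hlt
          have h2 : (R - Polynomial.C R.leadingCoeff * descPochhammer ℚ (n + 1)).natDegree
              < n + 1 := (natDegree_lt_iff_degree_lt hS0).mpr hlt
          omega
      obtain ⟨u, hu⟩ := ih _ hSdeg
      refine ⟨fun i => if i = n + 1 then R.leadingCoeff else u i, ?_⟩
      rw [Finset.sum_range_succ]
      beta_reduce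
      rw [if_pos rfl]
      have hstep : ∑ i ∈ Finset.range (n + 1),
          Polynomial.C (if i = n + 1 then R.leadingCoeff else u i) * descPochhammer ℚ i
          = R - Polynomial.C R.leadingCoeff * descPochhammer ℚ (n + 1) := by
        rw [hu]
        exact Finset.sum_congr rfl fun i hi => by
          rw [if_neg (by simp only [Finset.mem_range] at hi; omega)]
      rw [hstep]; ring

private lemma coeff_iter : ∀ (i : ℕ) (f : PowerSeries ℚ) (m : ℕ),
    PowerSeries.coeff m ((⇑(PowerSeries.derivative ℚ))^[i] f)
      = (descPochhammer ℚ i).eval ((m + i : ℕ) : ℚ) * PowerSeries.coeff (m + i) f := by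
  intro i
  induction i with
  | zero => intro f m; simp [descPochhammer_zero]
  | succ i ih =>
    intro f m
    rw [Function.iterate_succ_apply, ih, PowerSeries.coeff_derivative,
      descPochhammer_succ_left, eval_mul, eval_X, eval_comp, eval_sub, eval_X, eval_one]
    have h1 : ((m + i : ℕ) : ℚ) = ((m + (i + 1) : ℕ) : ℚ) - 1 := by push_cast; ring
    have h2 : m + i + 1 = m + (i + 1) := by omega
    rw [h1, h2]
    ring

/-- Let `p(x), q(x) ∈ ℤ[x]` with `q(n) ≠ 0` for all integers `n ≥ 0`, and
let `f ∈ ℚ⟦X⟧` be the formal power series whose `n`-th coefficient is `p(n)/q(n)`. Then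
`f` satisfies a nontrivial homogeneous linear differential equation with polynomial
coefficients over `ℚ`: there exist `k ≥ 0` and polynomials `c_0, …, c_k ∈ ℚ[X]`, not all
zero, with `Σ_{i=0}^k c_i(X) · f^{(i)}(X) = 0` as a formal power series. -/
theorem stmt_11 (p q : Polynomial ℤ)
    (hq : ∀ n : ℕ, q.eval (n : ℤ) ≠ 0)
    (f : PowerSeries ℚ)
    (hf : ∀ n : ℕ, PowerSeries.coeff n f
      = (↑(p.eval (n : ℤ)) / ↑(q.eval (n : ℤ)) : ℚ)) :
    ∃ (k : ℕ) (c : ℕ → Polynomial ℚ),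
      (∃ i ≤ k, c i ≠ 0) ∧
      ∑ i ∈ Finset.range (k + 1),
        ((c i : PowerSeries ℚ) * (⇑(PowerSeries.derivative ℚ))^[i] f) = 0 := by
  by_cases hp : p = 0
  · refine ⟨0, fun _ => 1, ⟨0, le_refl 0, one_ne_zero⟩, ?_⟩
    have hf0 : f = 0 := by
      ext n
      rw [hf n]
      simp [hp]
    simp [hf0]
  · set pq : Polynomial ℚ := p.map (Int.castRingHom ℚ) with hpqdef
    set qq : Polynomial ℚ := q.map (Int.castRingHom ℚ) with hqqdef
    have hpeval : ∀ n : ℕ, pq.eval ((n : ℕ) : ℚ) = ((p.eval (n : ℤ) : ℤ) : ℚ) := by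
      intro n
      rw [hpqdef]
      exact_mod_cast Polynomial.eval_intCast_map (Int.castRingHom ℚ) p (n : ℤ)
    have hqeval : ∀ n : ℕ, qq.eval ((n : ℕ) : ℚ) = ((q.eval (n : ℤ) : ℤ) : ℚ) := by
      intro n
      rw [hqqdef]
      exact_mod_cast Polynomial.eval_intCast_map (Int.castRingHom ℚ) q (n : ℤ)
    have hq' : ∀ n : ℕ, qq.eval ((n : ℕ) : ℚ) ≠ 0 := by
      intro n
      rw [hqeval n]
      exact_mod_cast hq n
    have ha : ∀ n : ℕ,
        PowerSeries.coeff n f = pq.eval ((n : ℕ) : ℚ) / qq.eval ((n : ℕ) : ℚ) := by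
      intro n; rw [hf n, hpeval n, hqeval n]
    have hpq0 : pq ≠ 0 := by
      intro h0
      exact hp (Polynomial.map_injective _ Int.cast_injective (by simpa using h0))
    have hqq0 : qq ≠ 0 := by
      intro h0
      have := hq' 0
      rw [h0] at this; simp at this
    set U : Polynomial ℚ := Polynomial.X * qq * (pq.comp (Polynomial.X - 1)) with hUdef
    set V : Polynomial ℚ := -((Polynomial.X + 1) * qq * (pq.comp (Polynomial.X + 1))) with hVdef
    have hU0 : U ≠ 0 := by
      have hc : pq.comp (Polynomial.X - 1) ≠ 0 := by
        intro h0
        apply hpq0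
        have hcc : (pq.comp (Polynomial.X - 1)).comp (Polynomial.X + 1) = pq := by
          rw [comp_assoc]
          simp [sub_comp]
        rw [← hcc, h0, zero_comp]
      exact mul_ne_zero (mul_ne_zero Polynomial.X_ne_zero hqq0) hc
    set K := max U.natDegree V.natDegree with hK
    obtain ⟨u, hu⟩ := dp_span K U (le_max_left _ _)
    obtain ⟨v, hv⟩ := dp_span K V (le_max_right _ _)
    set c : ℕ → Polynomial ℚ := fun i =>
      Polynomial.C (u i) * Polynomial.X ^ i + Polynomial.C (v i) * Polynomial.X ^ (i + 1)
      with hcdef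
    have hUx : ∀ x : ℚ,
        U.eval x = ∑ i ∈ Finset.range (K + 1), u i * (descPochhammer ℚ i).eval x := by
      intro x
      rw [hu, Polynomial.eval_finset_sum]
      simp
    have hVx : ∀ x : ℚ,
        V.eval x = ∑ i ∈ Finset.range (K + 1), v i * (descPochhammer ℚ i).eval x := by
      intro x
      rw [hv, Polynomial.eval_finset_sum]
      simp
    refine ⟨K, c, ?_, ?_⟩
    · -- nontriviality
      by_contra hcon
      push_neg at hcon
      apply hU0
      rw [hu]
      refine Finset.sum_eq_zero fun i hi => ?_
      have hi' : i ≤ K := by simp only [Finset.mem_range] at hi; omega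
      have hci := hcon i hi'
      have hui : u i = 0 := by
        have h2 : (c i).coeff i = 0 := by rw [hci]; simp
        rw [hcdef] at h2
        simpa [Polynomial.coeff_X_pow] using h2
      rw [hui]; simp
    · -- the differential equation
      ext N
      rw [map_sum, map_zero]
      have key : ∀ i ∈ Finset.range (K + 1),
          PowerSeries.coeff N ((c i : PowerSeries ℚ) * (⇑(PowerSeries.derivative ℚ))^[i] f)
          = u i * (descPochhammer ℚ i).eval ((N : ℕ) : ℚ) * PowerSeries.coeff N f
            + v i * (if 1 ≤ N then
                (descPochhammer ℚ i).eval ((N - 1 : ℕ) : ℚ) * PowerSeries.coeff (N - 1) f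
              else 0) := by
        intro i _
        rw [hcdef]
        simp only [Polynomial.coe_add, Polynomial.coe_mul, Polynomial.coe_C, Polynomial.coe_pow,
          Polynomial.coe_X]
        rw [add_mul, map_add, mul_assoc, mul_assoc, PowerSeries.coeff_C_mul,
          PowerSeries.coeff_C_mul, PowerSeries.coeff_X_pow_mul', PowerSeries.coeff_X_pow_mul',
          mul_assoc]
        congr 1
        · -- u part
          by_cases hiN : i ≤ N
          · rw [if_pos hiN, coeff_iter]
            have hNi : N - i + i = N := by omega
            rw [hNi]
          · rw [if_neg hiN]
            have hz : (descPochhammer ℚ i).eval ((N : ℕ) : ℚ) = 0 := by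
              rw [descPochhammer_eval_eq_descFactorial,
                Nat.descFactorial_eq_zero_iff_lt.mpr (by omega)]
              simp
            simp [hz]
        · -- v part
          by_cases hiN : i + 1 ≤ N
          · rw [if_pos hiN, if_pos (by omega), coeff_iter]
            have hNi : N - (i + 1) + i = N - 1 := by omega
            rw [hNi]
          · rw [if_neg hiN]
            by_cases hN : 1 ≤ N
            · rw [if_pos hN]
              have hz : (descPochhammer ℚ i).eval ((N - 1 : ℕ) : ℚ) = 0 := by
                rw [descPochhammer_eval_eq_descFactorial,
                  Nat.descFactorial_eq_zero_iff_lt.mpr (by omega)]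
                simp
              simp [hz]
            · rw [if_neg hN]
      rw [Finset.sum_congr rfl key, Finset.sum_add_distrib]
      rcases N with _ | m
      · simp only [if_neg (by omega : ¬ (1 : ℕ) ≤ 0), mul_zero, Finset.sum_const_zero, add_zero]
        rw [← Finset.sum_mul, ← hUx]
        have hU00 : U.eval (((0 : ℕ) : ℚ)) = 0 := by
          rw [hUdef]
          simp
        rw [hU00, zero_mul]
      · simp only [if_pos (by omega : 1 ≤ m + 1), Nat.add_sub_cancel]
        simp only [← mul_assoc]
        rw [← Finset.sum_mul, ← Finset.sum_mul, ← hUx, ← hVx]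
        have hy : ((m + 1 : ℕ) : ℚ) - 1 = ((m : ℕ) : ℚ) := by push_cast; ring
        have hy2 : ((m : ℕ) : ℚ) + 1 = ((m + 1 : ℕ) : ℚ) := by push_cast; ring
        have h1 : U.eval ((m + 1 : ℕ) : ℚ)
            = ((m + 1 : ℕ) : ℚ) * qq.eval ((m + 1 : ℕ) : ℚ) * pq.eval ((m : ℕ) : ℚ) := by
          rw [hUdef, eval_mul, eval_mul, eval_X, eval_comp, eval_sub, eval_X, eval_one, hy]
        have h2 : V.eval ((m : ℕ) : ℚ)
            = -(((m + 1 : ℕ) : ℚ) * qq.eval ((m : ℕ) : ℚ) * pq.eval ((m + 1 : ℕ) : ℚ)) := by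
          rw [hVdef, eval_neg, eval_mul, eval_mul, eval_add, eval_X, eval_one, eval_comp,
            eval_add, eval_X, eval_one, hy2]
        have hrel : ∀ n : ℕ, qq.eval ((n : ℕ) : ℚ) * PowerSeries.coeff n f
            = pq.eval ((n : ℕ) : ℚ) := by
          intro n
          rw [ha n, mul_div_cancel₀ _ (hq' n)]
        rw [h1, h2]
        have r1 := hrel (m + 1)
        have r2 := hrel m
        push_cast at r1 r2 ⊢
        linear_combination (((m : ℚ) + 1) * pq.eval ((m : ℚ))) * r1
          - (((m : ℚ) + 1) * pq.eval ((m : ℚ) + 1)) * r2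
end

section
/- Let q(x) ∈ ℤ[x] be a polynomial that factors into linear factors over ℚ (every irreducible factor of q in ℚ[x] has degree 1) and satisfies q(n) ≠ 0 for all integers n ≥ 1. Then there exists a constant C > 0 such that lcm(|q(1)|, |q(2)|, …, |q(n)|) ≤ C^n for all n ≥ 1. -/
open Polynomial

lemma L_pos' (n : ℕ) : 0 < (Finset.Icc 1 n).lcm id := by
  rcases Nat.eq_zero_or_pos ((Finset.Icc 1 n).lcm id) with h | h
  · rw [Finset.lcm_eq_zero_iff] at h
    obtain ⟨k, hk, hk0⟩ := h
    simp only [Finset.mem_coe, Finset.mem_Icc, id] at hk hk0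
    omega
  · exact h

lemma L_dvd_sq' (n : ℕ) :
    (Finset.Icc 1 n).lcm id ∣ primorial n * ((Finset.Icc 1 n.sqrt).lcm id)^2 := by
  apply Finset.lcm_dvd
  intro k hk
  simp only [Finset.mem_Icc] at hk
  rw [Nat.dvd_iff_prime_pow_dvd_dvd]
  intro p e hp hpe
  rcases Nat.eq_zero_or_pos e with rfl | he
  · simp
  have hp2 : 2 ≤ p := hp.two_le
  have hk0 : 0 < k := hk.1
  have hpk : p ^ e ≤ n := le_trans (Nat.le_of_dvd hk0 hpe) hk.2
  have hpn : p ∣ primorial n := by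
    unfold primorial
    apply Finset.dvd_prod_of_mem
    simp only [Finset.mem_filter, Finset.mem_range]
    have h1 : p ≤ p ^ e := Nat.le_self_pow he.ne' p
    exact ⟨by omega, hp⟩
  have hsq : p ^ (e / 2) ≤ n.sqrt := by
    rw [Nat.le_sqrt]
    calc p ^ (e/2) * p ^ (e/2) = p ^ (e/2 + e/2) := (pow_add p _ _).symm
    _ ≤ p ^ e := Nat.pow_le_pow_right (by omega) (by omega)
    _ ≤ n := hpk
  have hdvd : p ^ (e/2) ∣ (Finset.Icc 1 n.sqrt).lcm id := by
    have h2 : p ^ (e/2) ∈ Finset.Icc 1 n.sqrt := by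
      simp only [Finset.mem_Icc]
      exact ⟨Nat.one_le_iff_ne_zero.2 (pow_ne_zero _ (by omega)), hsq⟩
    exact Finset.dvd_lcm h2
  calc p ^ e ∣ p ^ (1 + (e/2 + e/2)) := pow_dvd_pow p (by omega)
  _ = p * (p^(e/2) * p^(e/2)) := by rw [pow_add, pow_add, pow_one]
  _ ∣ primorial n * ((Finset.Icc 1 n.sqrt).lcm id)^2 := by
      rw [sq]
      exact mul_dvd_mul hpn (mul_dvd_mul hdvd hdvd)

/-- The lcm of `1, …, n` is at most `64 ^ n`. -/
lemma L_le' (n : ℕ) : (Finset.Icc 1 n).lcm id ≤ 64 ^ n := by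
  induction n using Nat.strong_induction_on with
  | _ n ih =>
    rcases le_or_gt n 64 with hn | hn
    · have h1 : (Finset.Icc 1 n).lcm id ∣ Nat.factorial n := by
        apply Finset.lcm_dvd
        intro k hk
        simp only [Finset.mem_Icc, id] at hk ⊢
        exact Nat.dvd_factorial (by omega) hk.2
      calc (Finset.Icc 1 n).lcm id ≤ Nat.factorial n := Nat.le_of_dvd (Nat.factorial_pos n) h1
      _ ≤ n ^ n := Nat.factorial_le_pow n
      _ ≤ 64 ^ n := Nat.pow_le_pow_left hn n
    · have hs : n.sqrt < n := Nat.sqrt_lt_self (by omega)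
      have hsqmul' : n.sqrt * n.sqrt ≤ n := by
        have := Nat.sqrt_le' n
        simpa [pow_two] using this
      have h8 : 3 ≤ n.sqrt := by
        have h9 : 3 * 3 ≤ n := by omega
        exact Nat.le_sqrt.mpr h9
      have hkey : 6 * n.sqrt ≤ 2 * n := by nlinarith
      calc (Finset.Icc 1 n).lcm id ≤ primorial n * ((Finset.Icc 1 n.sqrt).lcm id)^2 :=
            Nat.le_of_dvd (Nat.mul_pos (primorial_pos n) (Nat.pow_pos (n := 2) (L_pos' _)))
              (L_dvd_sq' n)
      _ ≤ 4 ^ n * (64 ^ n.sqrt)^2 :=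
            Nat.mul_le_mul (primorial_le_4_pow n) (Nat.pow_le_pow_left (ih _ hs) 2)
      _ = 4 ^ n * 4 ^ (n.sqrt * 6) := by
            rw [show (64:ℕ) = 4 ^ 3 by norm_num, ← pow_mul, ← pow_mul]
            ring_nf
      _ = 4 ^ (n + n.sqrt * 6) := (pow_add 4 n _).symm
      _ ≤ 4 ^ (n + 2 * n) := Nat.pow_le_pow_right (by norm_num) (by omega)
      _ = 64 ^ n := by
            rw [show (64:ℕ) = 4^3 by norm_num, ← pow_mul]
            ring_nf

lemma natAbs_multiset_prod' (s : Multiset ℤ) : s.prod.natAbs = (s.map Int.natAbs).prod := by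
  induction s using Multiset.induction with
  | empty => simp
  | cons a s ih => simp [Int.natAbs_mul, ih]

lemma lcm_multiset_prod_dvd' (s : Finset ℕ) (R : Multiset ℚ) (g : ℚ → ℕ → ℕ) :
    (s.lcm fun k => (R.map (fun r => g r k)).prod) ∣ (R.map (fun r => s.lcm (g r))).prod := by
  induction R using Multiset.induction with
  | empty => exact Finset.lcm_dvd (by simp)
  | cons r R ih =>
    simp only [Multiset.map_cons, Multiset.prod_cons]
    apply Finset.lcm_dvd
    intro k hk
    exact mul_dvd_mul (Finset.dvd_lcm hk) ((Finset.dvd_lcm hk).trans ih)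


/-- Let `q(x) ∈ ℤ[x]` factor into linear factors over `ℚ` (every
irreducible factor of `q` in `ℚ[x]` has degree `1`) with `q(n) ≠ 0` for all integers
`n ≥ 1`. Then there exists `C > 0` with `lcm (|q(1)|, …, |q(n)|) ≤ C^n` for all `n ≥ 1`. -/
theorem stmt_14 (q : Polynomial ℤ)
    (hlin : ∀ r : Polynomial ℚ, Irreducible r → r ∣ q.map (Int.castRingHom ℚ) →
      r.degree = 1)
    (hq : ∀ n : ℕ, 1 ≤ n → q.eval (n : ℤ) ≠ 0) :
    ∃ C : ℝ, 0 < C ∧ ∀ n : ℕ, 1 ≤ n →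
      (((Finset.Icc 1 n).lcm (fun i => (q.eval (i : ℤ)).natAbs) : ℕ) : ℝ) ≤ C ^ n := by
  have hq0 : q ≠ 0 := by
    intro h
    exact hq 1 le_rfl (by simp [h])
  set Q : Polynomial ℚ := q.map (Int.castRingHom ℚ) with hQdef
  have hQ0 : Q ≠ 0 := (Polynomial.map_ne_zero_iff Int.cast_injective).mpr hq0
  have hsplit : Q.Splits :=
    Polynomial.splits_iff_splits.mpr (Or.inr fun {g} hg hdvd => hlin g hg hdvd)
  have hfac := hsplit.eq_prod_roots
  set R : Multiset ℚ := Q.roots with hRdef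
  have hlc : Q.leadingCoeff = (q.leadingCoeff : ℚ) :=
    Polynomial.leadingCoeff_map_of_injective Int.cast_injective q
  have hQeval : ∀ k : ℕ, Q.eval ((k : ℕ) : ℚ) = ((q.eval (k : ℤ) : ℤ) : ℚ) := by
    intro k
    rw [hQdef, Polynomial.eval_map]
    exact_mod_cast Polynomial.eval₂_at_natCast (Int.castRingHom ℚ) k
  -- evaluation identity over ℚ
  have heval : ∀ k : ℕ, ((q.eval (k : ℤ) : ℤ) : ℚ) = (q.leadingCoeff : ℚ) *
      (R.map fun r => (k : ℚ) - r).prod := by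
    intro k
    rw [← hQeval k]
    conv_lhs => rw [hfac]
    rw [Polynomial.eval_mul, Polynomial.eval_C, hlc, Polynomial.eval_multiset_prod,
      Multiset.map_map]
    congr 1
    apply congrArg
    apply Multiset.map_congr rfl
    intro r _
    simp
  -- key per-k divisibility over ℤ, after clearing denominators
  have hdvd1 : ∀ k : ℕ, q.eval (k : ℤ) ∣
      q.leadingCoeff * (R.map fun r => (r.den : ℤ) * k - r.num).prod := by
    intro k
    refine Dvd.intro ((R.map fun r => (r.den : ℤ)).prod) ?_
    have key : ((q.leadingCoeff * (R.map fun r => (r.den : ℤ) * k - r.num).prod : ℤ) : ℚ)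
        = ((q.eval (k : ℤ) * (R.map fun r => (r.den : ℤ)).prod : ℤ) : ℚ) := by
      rw [Int.cast_mul, Int.cast_mul, Int.cast_multiset_prod, Int.cast_multiset_prod,
        Multiset.map_map, Multiset.map_map,
        heval k, mul_assoc, ← Multiset.prod_map_mul]
      congr 1
      apply congrArg
      apply Multiset.map_congr rfl
      intro r _
      have hr : (r.den : ℚ) * r = r.num := Rat.den_mul_eq_num r
      simp only [Function.comp_apply, eq_intCast, Int.cast_sub, Int.cast_mul, Int.cast_natCast]
      linear_combination hr
    exact_mod_cast key.symm
  classical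
  set g : ℚ → ℕ → ℕ := fun r k => ((r.den : ℤ) * k - r.num).natAbs with hgdef
  set M : ℚ → ℕ := fun r => r.den + r.num.natAbs with hMdef
  set A : ℕ := q.leadingCoeff.natAbs with hAdef
  set B : ℕ := (R.map fun r => 64 ^ M r).prod with hBdef
  have hA1 : 1 ≤ A := Int.natAbs_pos.mpr (Polynomial.leadingCoeff_ne_zero.mpr hq0)
  have hB1 : 0 < B := Multiset.prod_pos (by
    intro x hx
    obtain ⟨r, _, rfl⟩ := Multiset.mem_map.mp hx
    positivity)
  -- positivity of the linear factors at positive integers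
  have hg_pos : ∀ r ∈ R, ∀ k : ℕ, 1 ≤ k → 1 ≤ g r k := by
    intro r hr k hk
    by_contra hcon
    have h0 : ((r.den : ℤ) * k - r.num) = 0 := by
      have : g r k = 0 := by omega
      simpa [hgdef, Int.natAbs_eq_zero] using this
    have hrk : r = (k : ℚ) := by
      have h1 : ((r.den : ℤ) : ℚ) * ((k : ℤ) : ℚ) = ((r.num : ℤ) : ℚ) := by
        exact_mod_cast congrArg (fun z : ℤ => (z : ℚ)) (show (r.den : ℤ) * k = r.num by omega)
      have hr2 : (r.den : ℚ) * r = r.num := Rat.den_mul_eq_num r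
      have hden : (r.den : ℚ) ≠ 0 := Nat.cast_ne_zero.mpr r.den_nz
      apply mul_left_cancel₀ hden
      rw [hr2]
      push_cast at h1 ⊢
      linarith [h1]
    have hroot : Q.eval r = 0 := Polynomial.isRoot_of_mem_roots (hRdef ▸ hr)
    rw [hrk, hQeval k] at hroot
    exact hq k hk (by exact_mod_cast hroot)
  have hg_le : ∀ r : ℚ, ∀ n k : ℕ, 1 ≤ k → k ≤ n → g r k ≤ M r * n := by
    intro r n k hk hkn
    have h1 : g r k ≤ ((r.den : ℤ) * k).natAbs + r.num.natAbs := Int.natAbs_sub_le _ _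
    have h2 : ((r.den : ℤ) * k).natAbs = r.den * k := by
      rw [Int.natAbs_mul]
      simp
    have h3 : r.den * k ≤ r.den * n := Nat.mul_le_mul_left _ hkn
    have h4 : r.num.natAbs ≤ r.num.natAbs * n := Nat.le_mul_of_pos_right _ (by omega)
    calc g r k ≤ r.den * k + r.num.natAbs := by omega
    _ ≤ r.den * n + r.num.natAbs * n := by omega
    _ = M r * n := by rw [hMdef]; ring
  refine ⟨((A * B : ℕ) : ℝ), by positivity, ?_⟩
  intro n hn
  -- chain of divisibilities and inequalities in ℕ
  have hdvd2 : ((Finset.Icc 1 n).lcm fun i => (q.eval (i : ℤ)).natAbs) ∣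
      A * (R.map fun r => (Finset.Icc 1 n).lcm (g r)).prod := by
    apply Finset.lcm_dvd
    intro k hk
    have h3 : (q.eval (k : ℤ)).natAbs ∣ A * (R.map fun r => g r k).prod := by
      have h2 := Int.natAbs_dvd_natAbs.mpr (hdvd1 k)
      rw [Int.natAbs_mul, natAbs_multiset_prod', Multiset.map_map] at h2
      simpa [Function.comp] using h2
    exact h3.trans (mul_dvd_mul_left A
      ((Finset.dvd_lcm hk).trans (lcm_multiset_prod_dvd' (Finset.Icc 1 n) R g)))
  have hlcm_r : ∀ r ∈ R, (Finset.Icc 1 n).lcm (g r) ≤ 64 ^ (M r * n) := by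
    intro r hr
    have hdvd : (Finset.Icc 1 n).lcm (g r) ∣ (Finset.Icc 1 (M r * n)).lcm id := by
      apply Finset.lcm_dvd
      intro k hk
      have hk' := Finset.mem_Icc.mp hk
      exact Finset.dvd_lcm (Finset.mem_Icc.mpr
        ⟨hg_pos r hr k hk'.1, hg_le r n k hk'.1 hk'.2⟩)
    exact le_trans (Nat.le_of_dvd (L_pos' _) hdvd) (L_le' _)
  have hlcm_pos : ∀ r ∈ R, 0 < (Finset.Icc 1 n).lcm (g r) := by
    intro r hr
    have hdvd : (Finset.Icc 1 n).lcm (g r) ∣ (Finset.Icc 1 (M r * n)).lcm id := by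
      apply Finset.lcm_dvd
      intro k hk
      have hk' := Finset.mem_Icc.mp hk
      exact Finset.dvd_lcm (Finset.mem_Icc.mpr
        ⟨hg_pos r hr k hk'.1, hg_le r n k hk'.1 hk'.2⟩)
    exact Nat.pos_of_ne_zero fun h0 => by
      rw [h0] at hdvd
      exact absurd (Nat.eq_zero_of_zero_dvd hdvd) (L_pos' _).ne'
  have hmain : ((Finset.Icc 1 n).lcm fun i => (q.eval (i : ℤ)).natAbs) ≤ (A * B) ^ n := by
    have hpos : 0 < A * (R.map fun r => (Finset.Icc 1 n).lcm (g r)).prod := by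
      apply Nat.mul_pos (by omega)
      apply Multiset.prod_pos
      intro x hx
      obtain ⟨r, hr, rfl⟩ := Multiset.mem_map.mp hx
      exact hlcm_pos r hr
    calc ((Finset.Icc 1 n).lcm fun i => (q.eval (i : ℤ)).natAbs)
        ≤ A * (R.map fun r => (Finset.Icc 1 n).lcm (g r)).prod := Nat.le_of_dvd hpos hdvd2
    _ ≤ A * (R.map fun r => 64 ^ (M r * n)).prod :=
        Nat.mul_le_mul_left A (Multiset.prod_map_le_prod_map _ _ hlcm_r)
    _ = A * B ^ n := by
        rw [hBdef, ← Multiset.prod_map_pow]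
        congr 2
        apply Multiset.map_congr rfl
        intro r _
        rw [pow_mul]
    _ ≤ (A * B) ^ n := by
        rw [mul_pow]
        exact Nat.mul_le_mul_right _ (Nat.le_self_pow (by omega) A)
  calc (((Finset.Icc 1 n).lcm fun i => (q.eval (i : ℤ)).natAbs : ℕ) : ℝ)
      ≤ (((A * B) ^ n : ℕ) : ℝ) := Nat.cast_le.mpr hmain
  _ = ((A * B : ℕ) : ℝ) ^ n := by push_cast; ring
end
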